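/- Let S be a nonempty finite set and let P : ℝ → S → S → ℝ, T : ℝ → S → ℝ, and π : ℝ → S → ℝ be differentiable in the real parameter t, such that for every t: (i) ∑_{s'} P(t)(s, s') = 1 for every s; (ii) ∑_{s} π(t)(s) = 1 and ∑_{s} π(t)(s) P(t)(s, s') = π(t)(s') for every s' (balance equations); and (iii) there exists d : ℝ → S → ℝ satisfying the Poisson equation d(t)(s) = T(t)(s) − ξ(t) + ∑_{s'} P(t)(s, s') d(t)(s') for every s, where ξ(t) = ∑_{s} π(t)(s) T(t)(s). Then the derivative of the average reward satisfies ξ'(t) = ∑_{s} π(t)(s) · ( T'(t)(s) + ∑_{s'} P'(t)(s, s') · d(t)(s') ). -/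

import Mathlib

/-!
Differentiating the balance equations `π ᵥ* P = π` and the normalisation `∑ π = 1` gives
`π' ᵥ* P + π ᵥ* P' = π'` and `∑ π' = 0`. Writing `T = (1 - P) d + ξ` by the Poisson equation,
`π' ⬝ᵥ T = (π' ᵥ* (1 - P)) ⬝ᵥ d = (π ᵥ* P') ⬝ᵥ d`, so the term of `ξ' = π' ⬝ᵥ T + π ⬝ᵥ T'` involving
the unknown derivative `π'` of the stationary distribution is expressed through `P'` and `d`.
-/

open Finset Matrix

section Algebra

variable {S R : Type*} [Fintype S] [CommRing R]

theorem dotProduct_eq_dotProduct_mulVec_of_poisson {π π' T d : S → R} {P P' : Matrix S S R}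
    {ξ : R} (hsum : ∑ s, π' s = 0) (hbal : π' ᵥ* P + π ᵥ* P' = π')
    (hpoisson : ∀ s, d s = T s - ξ + (P *ᵥ d) s) :
    π' ⬝ᵥ T = π ⬝ᵥ (P' *ᵥ d) := by
  have hT : T = d - P *ᵥ d + Function.const S ξ := by
    ext s
    simp only [Pi.add_apply, Pi.sub_apply, Function.const_apply]
    linear_combination -(hpoisson s)
  have hconst : π' ⬝ᵥ Function.const S ξ = 0 := by
    simp [dotProduct, ← sum_mul, hsum]
  calc π' ⬝ᵥ T = (π' - π' ᵥ* P) ⬝ᵥ d := by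
        rw [hT, dotProduct_add, hconst, dotProduct_sub, dotProduct_mulVec, sub_dotProduct,
          add_zero]
    _ = π ⬝ᵥ (P' *ᵥ d) := by
        rw [dotProduct_mulVec]
        exact congrArg (· ⬝ᵥ d) (sub_eq_iff_eq_add'.2 hbal.symm)

end Algebra

section Calculus

variable {S 𝕜 : Type*} [Fintype S] [NontriviallyNormedField 𝕜] {t : 𝕜}

theorem HasDerivAt.dotProduct {f g : 𝕜 → S → 𝕜} {f' g' : S → 𝕜}
    (hf : ∀ s, HasDerivAt (fun u => f u s) (f' s) t)
    (hg : ∀ s, HasDerivAt (fun u => g u s) (g' s) t) :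
    HasDerivAt (fun u => f u ⬝ᵥ g u) (f' ⬝ᵥ g t + f t ⬝ᵥ g') t := by
  simpa only [_root_.dotProduct, Pi.mul_apply, sum_add_distrib] using
    HasDerivAt.fun_sum fun s _ => (hf s).mul (hg s)

theorem HasDerivAt.vecMul {f : 𝕜 → S → 𝕜} {M : 𝕜 → Matrix S S 𝕜} {f' : S → 𝕜}
    {M' : Matrix S S 𝕜} (hf : ∀ s, HasDerivAt (fun u => f u s) (f' s) t)
    (hM : ∀ s s', HasDerivAt (fun u => M u s s') (M' s s') t) (s' : S) :
    HasDerivAt (fun u => (f u ᵥ* M u) s') ((f' ᵥ* M t + f t ᵥ* M') s') t :=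
  HasDerivAt.dotProduct hf fun s => hM s s'

theorem sum_eq_zero_of_hasDerivAt_of_sum_const {f : 𝕜 → S → 𝕜} {f' : S → 𝕜} {c : 𝕜}
    (hf : ∀ s, HasDerivAt (fun u => f u s) (f' s) t) (hsum : ∀ u, ∑ s, f u s = c) :
    ∑ s, f' s = 0 := by
  have hderiv := HasDerivAt.fun_sum (u := univ) fun s _ => hf s
  simp only [hsum] at hderiv
  exact hderiv.unique (hasDerivAt_const t c)

theorem vecMul_add_vecMul_eq_of_hasDerivAt_of_stationary {π : 𝕜 → S → 𝕜}
    {P : 𝕜 → Matrix S S 𝕜} {π' : S → 𝕜} {P' : Matrix S S 𝕜}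
    (hπ : ∀ s, HasDerivAt (fun u => π u s) (π' s) t)
    (hP : ∀ s s', HasDerivAt (fun u => P u s s') (P' s s') t)
    (hbal : ∀ u, π u ᵥ* P u = π u) :
    π' ᵥ* P t + π t ᵥ* P' = π' := by
  ext s'
  have hderiv := HasDerivAt.vecMul hπ hP s'
  simp only [hbal] at hderiv
  exact hderiv.unique (hπ s')

end Calculus

theorem average_reward_gradient_general (S : Type*) [Fintype S]
    (P : ℝ → S → S → ℝ) (T : ℝ → S → ℝ) (π : ℝ → S → ℝ) (d : ℝ → S → ℝ)
    (hPdiff : ∀ s s', Differentiable ℝ (fun t => P t s s'))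
    (hTdiff : ∀ s, Differentiable ℝ (fun t => T t s))
    (hπdiff : ∀ s, Differentiable ℝ (fun t => π t s))
    (hπsum : ∀ t, ∑ s, π t s = 1)
    (hbal : ∀ t s', ∑ s, π t s * P t s s' = π t s')
    (ξ : ℝ → ℝ) (hξ : ∀ t, ξ t = ∑ s, π t s * T t s)
    (hPoisson : ∀ t s, d t s = T t s - ξ t + ∑ s', P t s s' * d t s')
    (t : ℝ) :
    deriv ξ t
      = ∑ s, π t s * (deriv (fun u => T u s) t
          + ∑ s', deriv (fun u => P u s s') t * d t s') := by
  have hπ s := (hπdiff s t).hasDerivAt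
  have hT s := (hTdiff s t).hasDerivAt
  have hP s s' := (hPdiff s s' t).hasDerivAt
  have hπ'sum := sum_eq_zero_of_hasDerivAt_of_sum_const hπ hπsum
  have hbal' := vecMul_add_vecMul_eq_of_hasDerivAt_of_stationary (P := P) hπ hP
    fun u => funext (hbal u)
  rw [show ξ = fun u => π u ⬝ᵥ T u from funext hξ, (HasDerivAt.dotProduct hπ hT).deriv,
    dotProduct_eq_dotProduct_mulVec_of_poisson hπ'sum hbal' (hPoisson t)]
  simp only [dotProduct, mulVec, mul_add, sum_add_distrib]
  exact add_comm _ _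

/-- Policy-gradient formula (Proposition 1, Marbach–Tsitsiklis): under the
balance equations and the Poisson equation, the derivative of the average
reward ξ(t) = ∑_s π(t)(s) T(t)(s) is
ξ'(t) = ∑_s π(t)(s) (T'(t)(s) + ∑_{s'} P'(t)(s,s') d(t)(s')). -/
theorem average_reward_gradient (S : Type*) [Fintype S] [Nonempty S]
    (P : ℝ → S → S → ℝ) (T : ℝ → S → ℝ) (π : ℝ → S → ℝ) (d : ℝ → S → ℝ)
    (hPdiff : ∀ s s', Differentiable ℝ (fun t => P t s s'))
    (hTdiff : ∀ s, Differentiable ℝ (fun t => T t s))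
    (hπdiff : ∀ s, Differentiable ℝ (fun t => π t s))
    (hProw : ∀ t s, ∑ s', P t s s' = 1)
    (hπsum : ∀ t, ∑ s, π t s = 1)
    (hbal : ∀ t s', ∑ s, π t s * P t s s' = π t s')
    (ξ : ℝ → ℝ) (hξ : ∀ t, ξ t = ∑ s, π t s * T t s)
    (hPoisson : ∀ t s, d t s = T t s - ξ t + ∑ s', P t s s' * d t s')
    (t : ℝ) :
    deriv ξ t
      = ∑ s, π t s * (deriv (fun u => T u s) t
          + ∑ s', deriv (fun u => P u s s') t * d t s') :=
  average_reward_gradient_general S P T π d hPdiff hTdiff hπdiff hπsum hbal ξ hξ hPoisson t
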